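/- Let g : ℝ → ℝ be continuous with g(λ) → +∞ as λ → 0⁺ and g(λ) → +∞ as λ → +∞, defined on (0, ∞). Suppose that for every c ∈ ℝ, the level set {λ > 0 : g(λ) = c} contains at most two points. Then g attains its infimum on (0,∞) at a unique point λ* > 0, g is strictly decreasing on (0, λ*], and g is strictly increasing on [λ*, ∞). -/

import Mathlib

/-!
If `g z ≥ max (g x) (g y)` for some `x < z < y`, then a level strictly between `max (g x) (g y)`
and `g z` is attained in `(x, z)`, in `(z, y)` and, since `g → ∞`, beyond `y`: three points on one
level. So `g` is quasiconvex, and the bound on level sets upgrades this to strict quasiconvexity.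
A strictly quasiconvex function increases strictly to the right of a global minimizer and
decreases strictly to its left; the minimizer exists because `g` is coercive on `(0, ∞)`.
-/

open Filter Set

section Quasiconvex

variable {f : ℝ → ℝ} {a : ℝ}

lemma exists_gt_eq_of_lt (hf : ContinuousOn f (Ioi a)) (htop : Tendsto f atTop atTop)
    {x t : ℝ} (hx : a < x) (hxt : f x < t) : ∃ r, x < r ∧ f r = t := by
  obtain ⟨R, hR, hxR⟩ := ((htop.eventually_gt_atTop t).and (eventually_gt_atTop x)).exists
  obtain ⟨r, hr, hrt⟩ :=
    intermediate_value_Ioo hxR.le (hf.mono fun y hy => hx.trans_le hy.1) ⟨hxt, hR⟩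
  exact ⟨r, hr.1, hrt⟩

lemma le_max_of_lt_of_lt (hf : ContinuousOn f (Ioi a)) (htop : Tendsto f atTop atTop)
    (hlevel : ∀ x y z, a < x → x < y → y < z → f x = f y → f y ≠ f z)
    {x z y : ℝ} (hx : a < x) (hxz : x < z) (hzy : z < y) : f z ≤ max (f x) (f y) := by
  by_contra! h
  obtain ⟨t, hmax, htz⟩ := exists_between h
  rw [max_lt_iff] at hmax
  have hz : a < z := hx.trans hxz
  obtain ⟨p, hp, hpt⟩ :=
    intermediate_value_Ioo hxz.le (hf.mono fun w hw => hx.trans_le hw.1) ⟨hmax.1, htz⟩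
  obtain ⟨q, hq, hqt⟩ :=
    intermediate_value_Ioo' hzy.le (hf.mono fun w hw => hz.trans_le hw.1) ⟨hmax.2, htz⟩
  obtain ⟨r, hr, hrt⟩ := exists_gt_eq_of_lt hf htop (hz.trans hzy) hmax.2
  exact hlevel p q r (hx.trans hp.1) (hp.2.trans hq.1) (hq.2.trans hr)
    (hpt.trans hqt.symm) (hqt.trans hrt.symm)

lemma lt_max_of_lt_of_lt (hlevel : ∀ x y z, a < x → x < y → y < z → f x = f y → f y ≠ f z)
    (hqc : ∀ x z y, a < x → x < z → z < y → f z ≤ max (f x) (f y))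
    {x z y : ℝ} (hx : a < x) (hxz : x < z) (hzy : z < y) : f z < max (f x) (f y) := by
  refine (hqc x z y hx hxz hzy).lt_of_ne fun h => ?_
  have hz : a < z := hx.trans hxz
  -- Quasiconvexity, applied on both sides of a point `w` next to `z`, puts `w` on the level of `z`.
  rcases le_total (f x) (f y) with hxy | hyx
  · rw [max_eq_right hxy] at h
    have hfxz : f x < f z := (h ▸ hxy).lt_of_ne fun e => hlevel x z y hx hxz hzy e h
    obtain ⟨w, hzw, hwy⟩ := exists_between hzy
    have hwz : f w ≤ f z := by simpa [← h] using hqc z w y hz hzw hwy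
    have hzw' : f z ≤ f w := (le_max_iff.1 (hqc x z w hx hxz hzw)).resolve_left hfxz.not_ge
    exact hlevel z w y hz hzw hwy (hzw'.antisymm hwz) (hwz.antisymm hzw' ▸ h)
  · rw [max_eq_left hyx] at h
    have hfyz : f y < f z := (h ▸ hyx).lt_of_ne fun e => hlevel x z y hx hxz hzy h.symm e.symm
    obtain ⟨w, hxw, hwz⟩ := exists_between hxz
    have hwz' : f w ≤ f z := by simpa [← h] using hqc x w z hx hxw hwz
    have hzw : f z ≤ f w :=
      (le_max_iff.1 (hqc w z y (hx.trans hxw) hwz hzy)).resolve_right hfyz.not_ge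
    exact hlevel x w z hx hxw hwz (h.symm.trans (hzw.antisymm hwz')) (hwz'.antisymm hzw)

end Quasiconvex

section Minimizer

variable {f : ℝ → ℝ} {a lam : ℝ}

lemma lt_of_isMinOn_of_ne (hsq : ∀ x z y, a < x → x < z → z < y → f z < max (f x) (f y))
    (hlam : a < lam) (hmin : IsMinOn f (Ioi a) lam) {y : ℝ} (hy : a < y) (hne : y ≠ lam) :
    f lam < f y := by
  rcases hne.lt_or_gt with hyl | hly
  · obtain ⟨m, hym, hml⟩ := exists_between hyl
    have hm : f lam ≤ f m := hmin (hy.trans hym)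
    exact hm.trans_lt ((lt_max_iff.1 (hsq y m lam hy hym hml)).resolve_right hm.not_gt)
  · obtain ⟨m, hlm, hmy⟩ := exists_between hly
    have hm : f lam ≤ f m := hmin (hlam.trans hlm)
    exact hm.trans_lt ((lt_max_iff.1 (hsq lam m y hlam hlm hmy)).resolve_left hm.not_gt)

lemma strictMonoOn_Ici_of_isMinOn
    (hsq : ∀ x z y, a < x → x < z → z < y → f z < max (f x) (f y))
    (hlam : a < lam) (hmin : IsMinOn f (Ioi a) lam) : StrictMonoOn f (Ici lam) := by
  intro x (hx : lam ≤ x) y (hy : lam ≤ y) hxy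
  rcases hx.lt_or_eq with hlx | rfl
  · exact (lt_max_iff.1 (hsq lam x y hlam hlx hxy)).resolve_left (hmin (hlam.trans hlx)).not_gt
  · exact lt_of_isMinOn_of_ne hsq hlam hmin (hlam.trans_le hy) hxy.ne'

lemma strictAntiOn_Ioc_of_isMinOn
    (hsq : ∀ x z y, a < x → x < z → z < y → f z < max (f x) (f y))
    (hlam : a < lam) (hmin : IsMinOn f (Ioi a) lam) : StrictAntiOn f (Ioc a lam) := by
  intro x hx y hy hxy
  rcases hy.2.lt_or_eq with hyl | rfl
  · exact (lt_max_iff.1 (hsq x y lam hx.1 hxy hyl)).resolve_right (hmin hy.1).not_gt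
  · exact lt_of_isMinOn_of_ne hsq hlam hmin hx.1 hxy.ne

end Minimizer

lemma exists_isMinOn_Ioi_zero {g : ℝ → ℝ} (hc : ContinuousOn g (Ioi 0))
    (h0 : Tendsto g (nhdsWithin 0 (Ioi 0)) atTop) (hinf : Tendsto g atTop atTop) :
    ∃ lam, 0 < lam ∧ IsMinOn g (Ioi 0) lam := by
  have hcont : Continuous (g ∘ Real.exp) := hc.comp_continuous Real.continuous_exp Real.exp_pos
  have hcoercive : Tendsto (g ∘ Real.exp) (cocompact ℝ) atTop := by
    rw [cocompact_eq_atBot_atTop]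
    exact tendsto_sup.2 ⟨h0.comp Real.tendsto_exp_atBot_nhdsGT, hinf.comp Real.tendsto_exp_atTop⟩
  obtain ⟨s, hs⟩ := hcont.exists_forall_le hcoercive
  refine ⟨Real.exp s, Real.exp_pos s, fun x (hx : 0 < x) => ?_⟩
  simpa [Real.exp_log hx] using hs (Real.log x)

/-- a continuous function on `(0,∞)` blowing up at both ends whose level sets
have at most two points attains its infimum at a unique point, is strictly decreasing before
it and strictly increasing after it. -/
theorem stmt_1 (g : ℝ → ℝ)
    (hc : ContinuousOn g (Set.Ioi 0))
    (h0 : Tendsto g (nhdsWithin 0 (Set.Ioi 0)) atTop)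
    (hinf : Tendsto g atTop atTop)
    (hlevel : ∀ c : ℝ, ∀ a b d : ℝ, 0 < a → 0 < b → 0 < d →
      g a = c → g b = c → g d = c → a = b ∨ a = d ∨ b = d) :
    ∃ lam : ℝ, 0 < lam ∧ (∀ x : ℝ, 0 < x → g lam ≤ g x) ∧
      (∀ x : ℝ, 0 < x → (∀ x' : ℝ, 0 < x' → g x ≤ g x') → x = lam) ∧
      StrictAntiOn g (Set.Ioc 0 lam) ∧ StrictMonoOn g (Set.Ici lam) := by
  have hlevel' : ∀ x y z, 0 < x → x < y → y < z → g x = g y → g y ≠ g z := by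
    intro x y z hx hxy hyz hgxy hgyz
    rcases hlevel _ x y z hx (hx.trans hxy) (hx.trans (hxy.trans hyz)) rfl hgxy.symm
      (hgxy.trans hgyz).symm with h | h | h <;> linarith
  have hsq : ∀ x z y, 0 < x → x < z → z < y → g z < max (g x) (g y) := fun _ _ _ =>
    lt_max_of_lt_of_lt hlevel' (fun _ _ _ => le_max_of_lt_of_lt hc hinf hlevel')
  obtain ⟨lam, hlam, hmin⟩ := exists_isMinOn_Ioi_zero hc h0 hinf
  refine ⟨lam, hlam, fun x hx => hmin hx, fun x hx hxmin => ?_,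
    strictAntiOn_Ioc_of_isMinOn hsq hlam hmin, strictMonoOn_Ici_of_isMinOn hsq hlam hmin⟩
  by_contra hne
  exact (hxmin lam hlam).not_gt (lt_of_isMinOn_of_ne hsq hlam hmin hx hne)
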